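/- Let 1 ≤ m ≤ n₀ ≤ n and let S be a family of m-element subsets of [n₀], viewed also as a set of vertices of the Johnson graph J(n,m). Then |B(S)| = |B₀(S)| + (n − n₀)·|Δ(S)|, where B denotes the ball in J(n,m), B₀ denotes the ball in J(n₀,m), and Δ(S) is the lower shadow of S. -/

import Mathlib

open Finset

/-- The set of vertices of the Johnson graph `J(n,m)`: the `m`-element subsets of
`[n] = {0, …, n-1}`. -/
def johnsonVerts (n m : ℕ) : Finset (Finset ℕ) :=
  (Finset.range n).powersetCard m

/-- The (vertex) boundary of a set `S` of vertices in the Johnson graph `J(n,m)`: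
the vertices outside `S` whose symmetric difference with some member of `S` has
cardinality `2`. -/
def boundary (n m : ℕ) (S : Finset (Finset ℕ)) : Finset (Finset ℕ) :=
  (johnsonVerts n m).filter fun y => y ∉ S ∧ ∃ x ∈ S, (symmDiff x y).card = 2

/-- The ball of a set `S` of vertices in the Johnson graph `J(n,m)`. -/
def ball (n m : ℕ) (S : Finset (Finset ℕ)) : Finset (Finset ℕ) :=
  S ∪ boundary n m S

/-- The initial segment of length `k` in the colex order on `m`-element subsets of
`[n]`: the `m`-subsets `s` such that fewer than `k` of the `m`-subsets are
colex-smaller than `s`. -/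
def colexInitSeg (n m k : ℕ) : Finset (Finset ℕ) :=
  (johnsonVerts n m).filter fun s =>
    ((johnsonVerts n m).filter fun t =>
      toColex t < toColex s).card < k

/-- The isoperimetric function `μ_{n,m}(k)` of the Johnson graph `J(n,m)`:
the smallest boundary cardinality among sets of `k` vertices. -/
noncomputable def mu (n m k : ℕ) : ℕ :=
  sInf {b | ∃ S : Finset (Finset ℕ),
    S ⊆ johnsonVerts n m ∧ S.card = k ∧ (boundary n m S).card = b}

/-- The lower shadow of a family `S` of `m`-element subsets of `[n]`:
the `(m-1)`-subsets contained in some member of `S`. -/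
def lowShadow (n m : ℕ) (S : Finset (Finset ℕ)) : Finset (Finset ℕ) :=
  ((Finset.range n).powersetCard (m - 1)).filter fun t => ∃ s ∈ S, t ⊆ s

/-- The upper shadow of a family `S` of `c`-element subsets of `[n]`:
the `(c+1)`-subsets of `[n]` containing some member of `S`. -/
def upShadow' (n c : ℕ) (S : Finset (Finset ℕ)) : Finset (Finset ℕ) :=
  ((Finset.range n).powersetCard (c + 1)).filter fun t => ∃ s ∈ S, s ⊆ t

/-- The shift `T_{ij}` applied to a single set `x` of the family `S`. -/
def shiftFun (i j : ℕ) (S : Finset (Finset ℕ)) (x : Finset ℕ) : Finset ℕ :=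
  if i ∈ x ∧ j ∉ x ∧ insert j (x.erase i) ∉ S then insert j (x.erase i) else x

/-- The shift `T_{ij}(S)` of a family `S`. -/
def shift (i j : ℕ) (S : Finset (Finset ℕ)) : Finset (Finset ℕ) :=
  S.image (shiftFun i j S)

/-- `ks 0 > ks 1 > ⋯ > ks r ≥ m - r > 0` and `k = ∑_{i=0}^{r} C(ks i, m - i)`:
the `m`-binomial representation of `k`. -/
def IsMBinomialRep (m k r : ℕ) (ks : ℕ → ℕ) : Prop :=
  (∀ i < r, ks (i + 1) < ks i) ∧ m - r ≤ ks r ∧ r < m ∧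
    k = ∑ i ∈ Finset.range (r + 1), (ks i).choose (m - i)

/-- The function `f(k,n,m)` computed from the `m`-binomial representation
`k = ∑_{i=0}^{r} C(ks i, m - i)`:
`f = C(ks 0, m-1)·(n - ks 0) + ∑_{i=1}^{r} (C(ks i, m-i-1)·(n - ks 0 - 1) - C(ks i, m-i))`. -/
def fVal (n m r : ℕ) (ks : ℕ → ℕ) : ℤ :=
  ((ks 0).choose (m - 1) : ℤ) * ((n : ℤ) - ks 0) +
    ∑ i ∈ Finset.Icc 1 r,
      (((ks i).choose (m - i - 1) : ℤ) * ((n : ℤ) - ks 0 - 1) - ((ks i).choose (m - i) : ℤ))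

/-- The generalized binomial coefficient `C(x, j) = x(x-1)⋯(x-j+1)/j!` for an
integer `x` (the division is exact). -/
def genChoose (x : ℤ) (j : ℕ) : ℤ :=
  (∏ i ∈ Finset.range j, (x - i)) / (j.factorial : ℤ)

/-!
A vertex of the ball of `S` in `J(n,m)` either lies inside `[n₀]`, where adjacency to `S` is
the same as in `J(n₀,m)`, or contains some `j ≥ n₀`. Since `j` lies outside every member of `S`,
such a vertex `y` is adjacent to `x ∈ S` exactly when `y \ {j} ⊆ x`; hence these vertices are
the sets `t ∪ {j}` with `n₀ ≤ j < n` and `t ∈ Δ(S)`, and `(j, t)` is recovered from `t ∪ {j}`.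
-/

section

variable {α : Type*} [DecidableEq α]

theorem card_symmDiff_add_two_mul_card_inter (x y : Finset α) :
    #(symmDiff x y) + 2 * #(x ∩ y) = #x + #y := by
  rw [symmDiff_def, sup_eq_union, card_union_of_disjoint disjoint_sdiff_sdiff]
  have := card_sdiff_add_card_inter x y
  have := card_sdiff_add_card_inter y x
  rw [inter_comm y x] at this
  omega

theorem card_symmDiff_eq_two_iff_erase_subset {x y : Finset α} {j : α} (hxy : #x = #y)
    (hjy : j ∈ y) (hjx : j ∉ x) : #(symmDiff x y) = 2 ↔ y.erase j ⊆ x := by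
  have hinter : x ∩ y ⊆ y.erase j := fun a ha =>
    mem_erase.2 ⟨fun h => hjx (h ▸ (mem_inter.1 ha).1), (mem_inter.1 ha).2⟩
  have hcard := card_symmDiff_add_two_mul_card_inter x y
  have herase := card_erase_of_mem hjy
  have hpos := card_pos.2 ⟨j, hjy⟩
  constructor
  · intro h
    have : x ∩ y = y.erase j := eq_of_subset_of_card_le hinter (by omega)
    exact this ▸ inter_subset_left
  · intro h
    have : x ∩ y = y.erase j :=
      hinter.antisymm fun a ha => mem_inter.2 ⟨h ha, mem_of_mem_erase ha⟩
    rw [this] at hcard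
    omega

theorem card_image_insert_product {A : Finset α} {T : Finset (Finset α)}
    (hAT : ∀ j ∈ A, ∀ t ∈ T, j ∉ t) :
    #((A ×ˢ T).image fun p => insert p.1 p.2) = #A * #T := by
  rw [card_image_of_injOn, card_product]
  rintro ⟨j, t⟩ hjt ⟨j', t'⟩ hjt' heq
  simp only [coe_product, Set.mem_prod, mem_coe] at hjt hjt' heq
  have hj : j = j' := by
    have : j ∈ insert j' t' := heq ▸ mem_insert_self j t
    exact (mem_insert.1 this).resolve_right (hAT j hjt.1 t' hjt'.2)
  subst hj
  have := congrArg (erase · j) heq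
  simp only [erase_insert (hAT j hjt.1 t hjt.2), erase_insert (hAT j hjt'.1 t' hjt'.2)] at this
  rw [this]

end

@[simp]
theorem mem_johnsonVerts {n m : ℕ} {x : Finset ℕ} :
    x ∈ johnsonVerts n m ↔ x ⊆ range n ∧ #x = m :=
  mem_powersetCard

@[simp]
theorem mem_lowShadow {n m : ℕ} {S : Finset (Finset ℕ)} {t : Finset ℕ} :
    t ∈ lowShadow n m S ↔ (t ⊆ range n ∧ #t = m - 1) ∧ ∃ s ∈ S, t ⊆ s := by
  rw [lowShadow, mem_filter, mem_powersetCard]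

theorem notMem_of_subset_range {n₀ j : ℕ} {x : Finset ℕ} (hj : n₀ ≤ j) (hx : x ⊆ range n₀) :
    j ∉ x :=
  fun hjx => (mem_range.1 (hx hjx)).not_ge hj

theorem johnsonVerts_eq_filter_subset_range {n₀ n : ℕ} (m : ℕ) (hn : n₀ ≤ n) :
    johnsonVerts n₀ m = (johnsonVerts n m).filter (· ⊆ range n₀) := by
  ext x
  simp only [mem_johnsonVerts, mem_filter]
  exact ⟨fun h => ⟨⟨h.1.trans (range_subset_range.2 hn), h.2⟩, h.1⟩,
    fun h => ⟨h.2, h.1.2⟩⟩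

theorem filter_ball_subset_range {n₀ n : ℕ} (m : ℕ) (hn : n₀ ≤ n) {S : Finset (Finset ℕ)}
    (hS : ∀ x ∈ S, x ⊆ range n₀) :
    (ball n m S).filter (· ⊆ range n₀) = ball n₀ m S := by
  rw [ball, ball, filter_union, filter_true_of_mem hS, boundary, boundary, filter_filter,
    johnsonVerts_eq_filter_subset_range m hn, filter_filter]
  simp only [and_comm]

theorem filter_ball_not_subset_range {n₀ n m : ℕ} (hm : 1 ≤ m) (hn : n₀ ≤ n)
    {S : Finset (Finset ℕ)} (hS : S ⊆ johnsonVerts n₀ m) :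
    (ball n m S).filter (¬ · ⊆ range n₀) =
      (Ico n₀ n ×ˢ lowShadow n₀ m S).image fun p => insert p.1 p.2 := by
  have hS₀ : ∀ x ∈ S, x ⊆ range n₀ := fun x hx => (mem_johnsonVerts.1 (hS hx)).1
  rw [ball, filter_union, filter_false_of_mem fun x hx h => h (hS₀ x hx), empty_union]
  ext y
  simp only [boundary, mem_filter, mem_johnsonVerts, mem_image, mem_product, mem_Ico,
    mem_lowShadow, Prod.exists]
  constructor
  · rintro ⟨⟨⟨hyn, hym⟩, -, x, hxS, hxy⟩, hy₀⟩
    obtain ⟨j, hjy, hj⟩ := not_subset.1 hy₀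
    have hjn₀ : n₀ ≤ j := not_lt.1 (mt mem_range.2 hj)
    have hjx := notMem_of_subset_range hjn₀ (hS₀ x hxS)
    have hyx : y.erase j ⊆ x := (card_symmDiff_eq_two_iff_erase_subset
      (by rw [hym, (mem_johnsonVerts.1 (hS hxS)).2]) hjy hjx).1 hxy
    exact ⟨j, y.erase j, ⟨⟨hjn₀, mem_range.1 (hyn hjy)⟩, ⟨hyx.trans (hS₀ x hxS),
      by rw [card_erase_of_mem hjy, hym]⟩, x, hxS, hyx⟩, insert_erase hjy⟩
  · rintro ⟨j, t, ⟨⟨hjn₀, hjn⟩, ⟨ht₀, htm⟩, s, hsS, hts⟩, rfl⟩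
    have hjt := notMem_of_subset_range hjn₀ ht₀
    have hjs := notMem_of_subset_range hjn₀ (hS₀ s hsS)
    have hins : insert j t ⊆ range n :=
      insert_subset (mem_range.2 hjn) (ht₀.trans (range_subset_range.2 hn))
    have hcard : #(insert j t) = m := by
      rw [card_insert_of_notMem hjt, htm]
      omega
    have hout : ¬insert j t ⊆ range n₀ := fun h =>
      notMem_of_subset_range hjn₀ h (mem_insert_self j t)
    refine ⟨⟨⟨hins, hcard⟩, fun h => hout (hS₀ _ h), s, hsS, ?_⟩, hout⟩
    rw [card_symmDiff_eq_two_iff_erase_subset (by rw [hcard, (mem_johnsonVerts.1 (hS hsS)).2])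
      (mem_insert_self j t) hjs, erase_insert hjt]
    exact hts

theorem card_ball_eq_card_ball_add_shadow_general
    (n₀ n m : ℕ) (hm : 1 ≤ m) (hn₀n : n₀ ≤ n)
    (S : Finset (Finset ℕ)) (hS : S ⊆ johnsonVerts n₀ m) :
    (ball n m S).card = (ball n₀ m S).card + (n - n₀) * (lowShadow n₀ m S).card := by
  have hS₀ : ∀ x ∈ S, x ⊆ range n₀ := fun x hx => (mem_johnsonVerts.1 (hS hx)).1
  have hdisj : ∀ j ∈ Ico n₀ n, ∀ t ∈ lowShadow n₀ m S, j ∉ t := fun _ hj _ ht =>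
    notMem_of_subset_range (mem_Ico.1 hj).1 (mem_lowShadow.1 ht).1.1
  rw [← card_filter_add_card_filter_not (s := ball n m S) (· ⊆ range n₀),
    filter_ball_subset_range m hn₀n hS₀, filter_ball_not_subset_range hm hn₀n hS,
    card_image_insert_product hdisj, Nat.card_Ico]

/-- For `1 ≤ m ≤ n₀ ≤ n` and a family `S` of `m`-subsets of
`[n₀]`, the ball of `S` in `J(n,m)` satisfies
`|B(S)| = |B₀(S)| + (n - n₀)·|Δ(S)|`, where `B₀` is the ball in `J(n₀,m)`. -/
theorem card_ball_eq_card_ball_add_shadow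
    (n₀ n m : ℕ) (hm : 1 ≤ m) (hmn₀ : m ≤ n₀) (hn₀n : n₀ ≤ n)
    (S : Finset (Finset ℕ)) (hS : S ⊆ johnsonVerts n₀ m) :
    (ball n m S).card = (ball n₀ m S).card + (n - n₀) * (lowShadow n₀ m S).card :=
  card_ball_eq_card_ball_add_shadow_general n₀ n m hm hn₀n S hS
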